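/- For all integers k ≥ 2, n ≥ 1, m ≥ 1, every real u0 ≥ 0, and all γ, η ∈ (0,1]: E[X(γ,η)] = η^{−u0·m} · 2^n · Z(γ,η)^m, where Z(γ,η) = ((γ + γ^{−1})/2)^k − (2γ)^{−k}·(1 − η). -/

import Mathlib

open Finset Filter Real

noncomputable section

abbrev Formula (n k m : ℕ) := Fin m → Fin k → Fin n × Bool

def clauseSat {n k : ℕ} (σ : Fin n → Bool) (c : Fin k → Fin n × Bool) : Prop :=
  ∃ j : Fin k, σ (c j).1 = (c j).2

instance {n k : ℕ} (σ : Fin n → Bool) (c : Fin k → Fin n × Bool) :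
    Decidable (clauseSat σ c) := by unfold clauseSat; infer_instance

/-- `H(σ,F)`: number of satisfied literal occurrences minus number of unsatisfied ones. -/
def Hscore {n k m : ℕ} (σ : Fin n → Bool) (F : Formula n k m) : ℤ :=
  ∑ i : Fin m, ∑ j : Fin k, (if σ (F i j).1 = (F i j).2 then (1:ℤ) else -1)

/-- `U(σ,F)`: number of clauses of `F` not satisfied by `σ`. -/
def Uscore {n k m : ℕ} (σ : Fin n → Bool) (F : Formula n k m) : ℕ :=
  (Finset.univ.filter fun i => ¬ clauseSat σ (F i)).card

/-- Expectation of a real random variable under the uniform distribution on a finite type. -/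
def EV {β : Type*} [Fintype β] (X : β → ℝ) : ℝ := (∑ x : β, X x) / (Fintype.card β)

/-- `X(γ,η) = Σ_σ γ^{H(σ,F)} η^{U(σ,F) − u₀·m}` (real exponents). -/
def Xweight (n k m : ℕ) (u0 γ η : ℝ) (F : Formula n k m) : ℝ :=
  ∑ σ : Fin n → Bool,
    γ ^ ((Hscore σ F : ℤ) : ℝ) * η ^ ((Uscore σ F : ℝ) - u0 * m)

/-- Literal weight. -/
def gLit {n : ℕ} (σ : Fin n → Bool) (γ : ℝ) (l : Fin n × Bool) : ℝ :=
  if σ l.1 = l.2 then γ else γ⁻¹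

/-- Clause weight. -/
def fClause {n k : ℕ} (σ : Fin n → Bool) (γ η : ℝ) (c : Fin k → Fin n × Bool) : ℝ :=
  (∏ j, gLit σ γ (c j)) * (if clauseSat σ c then 1 else η)

lemma zpow_sum₀' {γ : ℝ} (hγ : γ ≠ 0) {α : Type*} (s : Finset α) (f : α → ℤ) :
    γ ^ (∑ x ∈ s, f x) = ∏ x ∈ s, γ ^ f x := by
  classical
  induction s using Finset.induction with
  | empty => simp
  | @insert a s h ih => rw [Finset.sum_insert h, Finset.prod_insert h, zpow_add₀ hγ, ih]

lemma sum_gLit {n : ℕ} (σ : Fin n → Bool) (γ : ℝ) :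
    ∑ l : Fin n × Bool, gLit σ γ l = n * (γ + γ⁻¹) := by
  rw [Fintype.sum_prod_type]
  have : ∀ i : Fin n, ∑ b : Bool, gLit σ γ (i, b) = γ + γ⁻¹ := by
    intro i
    rw [Fintype.sum_bool]
    unfold gLit
    cases h : σ i <;> simp [h, add_comm]
  simp only [this, Finset.sum_const, Finset.card_univ, Fintype.card_fin, nsmul_eq_mul]

lemma sum_gLit_unsat {n : ℕ} (σ : Fin n → Bool) (γ : ℝ) :
    ∑ l : Fin n × Bool, (if σ l.1 = l.2 then (0:ℝ) else γ⁻¹) = n * γ⁻¹ := by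
  rw [Fintype.sum_prod_type]
  have : ∀ i : Fin n, ∑ b : Bool, (if σ (i,b).1 = (i,b).2 then (0:ℝ) else γ⁻¹) = γ⁻¹ := by
    intro i
    rw [Fintype.sum_bool]
    cases h : σ i <;> simp [h]
  simp only [this, Finset.sum_const, Finset.card_univ, Fintype.card_fin, nsmul_eq_mul]

lemma fClause_eq {n k : ℕ} (σ : Fin n → Bool) (γ η : ℝ) (c : Fin k → Fin n × Bool) :
    fClause σ γ η c = (∏ j, gLit σ γ (c j))
      - (1 - η) * ∏ j, (if σ (c j).1 = (c j).2 then (0:ℝ) else γ⁻¹) := by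
  unfold fClause
  by_cases h : clauseSat σ c
  · obtain ⟨j0, hj0⟩ := h
    rw [if_pos ⟨j0, hj0⟩]
    have hz : (∏ j, (if σ (c j).1 = (c j).2 then (0:ℝ) else γ⁻¹)) = 0 :=
      Finset.prod_eq_zero (Finset.mem_univ j0) (by simp [hj0])
    rw [hz]; ring
  · rw [if_neg h]
    have hall : ∀ j : Fin k, ¬ (σ (c j).1 = (c j).2) := by
      intro j hj; exact h ⟨j, hj⟩
    have h1 : (∏ j, gLit σ γ (c j)) = ∏ j : Fin k, γ⁻¹ :=
      Finset.prod_congr rfl fun j _ => by simp [gLit, hall j]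
    have h2 : (∏ j, (if σ (c j).1 = (c j).2 then (0:ℝ) else γ⁻¹)) = ∏ j : Fin k, γ⁻¹ :=
      Finset.prod_congr rfl fun j _ => by simp [hall j]
    rw [h1, h2]; ring

lemma sum_fClause {n k : ℕ} (σ : Fin n → Bool) (γ η : ℝ) :
    ∑ c : Fin k → Fin n × Bool, fClause σ γ η c
      = (n * (γ + γ⁻¹))^k - (1 - η) * (n * γ⁻¹)^k := by
  simp only [fClause_eq]
  rw [Finset.sum_sub_distrib, ← Finset.mul_sum]
  have e1 : ∑ c : Fin k → Fin n × Bool, ∏ j, gLit σ γ (c j) = (n * (γ + γ⁻¹))^k := by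
    rw [← Fintype.piFinset_univ, ← Finset.prod_univ_sum]
    simp [sum_gLit σ γ]
  have e2 : ∑ c : Fin k → Fin n × Bool,
      ∏ j, (if σ (c j).1 = (c j).2 then (0:ℝ) else γ⁻¹) = (n * γ⁻¹)^k := by
    have := (Finset.prod_univ_sum (fun _ : Fin k => (Finset.univ : Finset (Fin n × Bool)))
      (fun _ l => if σ l.1 = l.2 then (0:ℝ) else γ⁻¹)).symm
    rw [← Fintype.piFinset_univ, this]
    simp [sum_gLit_unsat σ γ]
  rw [e1, e2]

lemma prod_form {n k m : ℕ} (σ : Fin n → Bool) {γ : ℝ} (η : ℝ) (hγ : γ ≠ 0)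
    (F : Formula n k m) :
    (γ ^ Hscore σ F) * η ^ Uscore σ F = ∏ i, fClause σ γ η (F i) := by
  have hH : (γ : ℝ) ^ Hscore σ F = ∏ i : Fin m, ∏ j : Fin k, gLit σ γ (F i j) := by
    unfold Hscore
    rw [zpow_sum₀' hγ]
    refine Finset.prod_congr rfl fun i _ => ?_
    rw [zpow_sum₀' hγ]
    refine Finset.prod_congr rfl fun j _ => ?_
    unfold gLit
    split <;> simp
  have hU : η ^ Uscore σ F = ∏ i : Fin m, (if clauseSat σ (F i) then (1:ℝ) else η) := by
    unfold Uscore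
    rw [Finset.prod_ite, Finset.prod_const_one, one_mul, Finset.prod_const]
  rw [hH, hU, ← Finset.prod_mul_distrib]
  rfl

lemma sum_formula {n k m : ℕ} (σ : Fin n → Bool) {γ : ℝ} (η : ℝ) (hγ : γ ≠ 0) :
    ∑ F : Formula n k m, (γ ^ Hscore σ F) * η ^ Uscore σ F
      = ((n * (γ + γ⁻¹))^k - (1 - η) * (n * γ⁻¹)^k)^m := by
  simp only [prod_form σ η hγ]
  rw [← Fintype.piFinset_univ, ← Finset.prod_univ_sum]
  simp [sum_fClause σ γ η]

/-- First moment (eq. (12) of the paper):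
`E[X(γ,η)] = η^{−u₀·m} · 2^n · Z(γ,η)^m` where
`Z(γ,η) = ((γ+γ⁻¹)/2)^k − (2γ)^{−k}·(1−η)`. -/
theorem first_moment (k n m : ℕ) (hk : 2 ≤ k) (hn : 1 ≤ n) (hm : 1 ≤ m)
    (u0 γ η : ℝ) (hu0 : 0 ≤ u0) (hγ0 : 0 < γ) (hγ1 : γ ≤ 1) (hη0 : 0 < η) (hη1 : η ≤ 1) :
    EV (Xweight n k m u0 γ η) =
      η ^ (-(u0 * m)) * 2^n * (((γ + γ⁻¹)/2)^k - ((2*γ)^k)⁻¹ * (1-η))^m := by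
  have hγ : γ ≠ 0 := ne_of_gt hγ0
  have hη : η ≠ 0 := ne_of_gt hη0
  -- rewrite each term
  have hterm : ∀ (σ : Fin n → Bool) (F : Formula n k m),
      γ ^ ((Hscore σ F : ℤ) : ℝ) * η ^ ((Uscore σ F : ℝ) - u0 * m)
        = ((γ ^ Hscore σ F) * η ^ Uscore σ F) * η ^ (-(u0 * m)) := by
    intro σ F
    rw [Real.rpow_intCast, sub_eq_add_neg, Real.rpow_add hη0, Real.rpow_natCast]
    ring
  unfold EV Xweight
  rw [Finset.sum_comm]
  have hsum : ∀ σ : Fin n → Bool,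
      ∑ F : Formula n k m, γ ^ ((Hscore σ F : ℤ) : ℝ) * η ^ ((Uscore σ F : ℝ) - u0 * m)
        = ((n * (γ + γ⁻¹))^k - (1 - η) * (n * γ⁻¹)^k)^m * η ^ (-(u0 * m)) := by
    intro σ
    simp only [hterm σ]
    rw [← Finset.sum_mul, sum_formula σ η hγ]
  simp only [hsum, Finset.sum_const, Finset.card_univ, nsmul_eq_mul]
  have hcard2 : (Fintype.card (Fin n → Bool) : ℝ) = 2^n := by
    simp [Fintype.card_fun]
  have hcardF : (Fintype.card (Formula n k m) : ℝ) = ((2*n : ℝ)^k)^m := by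
    rw [Fintype.card_fun, Fintype.card_fun]
    simp only [Fintype.card_prod, Fintype.card_fin, Fintype.card_bool]
    push_cast
    rw [← pow_mul, ← pow_mul]
    ring
  rw [hcard2, hcardF]
  have hn' : (0:ℝ) < 2 * n := by positivity
  have ha : (γ + γ⁻¹)/2 * (2*(n:ℝ)) = n * (γ + γ⁻¹) := by ring
  have hb : (2*(n:ℝ))/(2*γ) = n * γ⁻¹ := by
    rw [mul_div_mul_left _ _ (two_ne_zero), div_eq_mul_inv]
  have hZ : (n * (γ + γ⁻¹))^k - (1 - η) * (n * γ⁻¹)^k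
      = (((γ + γ⁻¹)/2)^k - ((2*γ)^k)⁻¹ * (1-η)) * (2*n:ℝ)^k := by
    have h1 : ((n:ℝ)*(γ+γ⁻¹))^k = ((γ+γ⁻¹)/2)^k * (2*(n:ℝ))^k := by rw [← mul_pow, ha]
    have h2 : ((n:ℝ)*γ⁻¹)^k = ((2*γ)^k)⁻¹ * (2*(n:ℝ))^k := by
      rw [← hb, div_pow, div_eq_mul_inv, mul_comm]
    rw [h1, h2]
    ring
  rw [hZ, mul_pow]
  have hne : ((2*n:ℝ)^k)^m ≠ 0 := by positivity
  field_simp
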